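/- arXiv:2502.14794 — 2 statements merged into one kernel-verified Lean document; each statement's English description precedes it below -/
import Mathlib

section
/- Let F be a d-regular locally sparse graph on [n], let k ∈ ℕ, and let F' be the induced subgraph of F on [k]. Then for every integer v with 3 ≤ v ≤ n−3, the number of closed subgraphs of F contained in F' with v vertices is at most 2dk/3. -/
open SimpleGraph

/-- The edge boundary of a subgraph `H` of `G`: edges of `G` with one endpoint in `H.verts`
and the other outside. -/
def edgeBoundary {V : Type*} (G : SimpleGraph V) (H : G.Subgraph) : Set (Sym2 V) :=
  {e | ∃ u v, e = s(u, v) ∧ G.Adj u v ∧ u ∈ H.verts ∧ v ∉ H.verts}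

/-- `G` is `d`-regular. -/
def IsRegularGraph {V : Type*} (G : SimpleGraph V) (d : ℕ) : Prop :=
  ∀ v, (G.neighborSet v).ncard = d

/-- `G` on `n` vertices is locally sparse: every subgraph on between 3 and `n - 3`
vertices has edge boundary of size at least `d + 1`. -/
def LocallySparse {n : ℕ} (G : SimpleGraph (Fin n)) (d : ℕ) : Prop :=
  ∀ H : G.Subgraph, 3 ≤ H.verts.ncard → H.verts.ncard ≤ n - 3 →
    d + 1 ≤ (edgeBoundary G H).ncard

/-- `Δ = d + 1` for odd `d`, `Δ = d + 2` for even `d`. -/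
def Delta (d : ℕ) : ℕ := if Odd d then d + 1 else d + 2

/-- A closed subgraph: an induced subgraph whose edge boundary has size exactly `Δ`. -/
def IsClosedSubgraph {V : Type*} (G : SimpleGraph V) (d : ℕ) (H : G.Subgraph) : Prop :=
  H.IsInduced ∧ (edgeBoundary G H).ncard = Delta d

/-!
Write `∂S` for the number of edges leaving a vertex set `S` and `e(X, Y)` for the number of
edges from `X` to `Y`. Every `S` with `2 ≤ |S| ≤ n - 2` has `∂S ≥ Δ`: by local sparsity and
parity, or by a direct count when `S` or `Sᶜ` has two vertices.

Fix an edge `uw`. Two distinct closed `v`-sets `A`, `B` containing `u` but not `w` satisfy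
`|A \ B| = 1`, since otherwise posimodularity
`∂(A \ B) + ∂(B \ A) + 2 e(A ∩ B, (A ∪ B)ᶜ) ≤ ∂A + ∂B` and the edge `uw` give `2Δ + 2 ≤ 2Δ`.
Three such sets then either share a core `S` of size `v - 1` or lie in a common set of size
`v + 1`, and complementation turns the second case into the first. There the three sets are
`S ∪ {z}` for `z = a, b, c`, so `∂S + d - 2 e(S, {z}) = Δ`, and `e(S, {a, b, c, w}) ≤ ∂S`
forces `∂S < Δ`. Hence each directed edge leaves at most two closed `v`-sets, and double counting the
`Δ ≥ 3` boundary edges of the closed sets inside `[k]` against the at most `dk` directed edges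
leaving vertices of `[k]` gives the bound.
-/

open Finset

namespace SimpleGraph

variable {V : Type*} (G : SimpleGraph V) [DecidableRel G.Adj]

theorem card_interedges_comm (s t : Finset V) : #(G.interedges s t) = #(G.interedges t s) :=
  have := G.symm
  Rel.card_interedges_comm s t

theorem card_interedges_eq_sum (s t : Finset V) :
    #(G.interedges s t) = ∑ x ∈ s, #{y ∈ t | G.Adj x y} := by
  simp only [interedges_def, card_filter, sum_product]

section Fintype

variable [Fintype V]

theorem card_interedges_univ_right (s : Finset V) :
    #(G.interedges s univ) = ∑ x ∈ s, G.degree x := by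
  simp only [card_interedges_eq_sum, ← card_neighborFinset_eq_degree, neighborFinset_eq_filter]

theorem IsRegularOfDegree.card_interedges_univ_right {d : ℕ} (hG : G.IsRegularOfDegree d)
    (s : Finset V) : #(G.interedges s univ) = d * #s := by
  rw [G.card_interedges_univ_right, sum_congr rfl fun x _ ↦ hG x, sum_const, smul_eq_mul,
    mul_comm]

end Fintype

variable [DecidableEq V]

theorem card_interedges_union_left {s₁ s₂ : Finset V} (h : Disjoint s₁ s₂) (t : Finset V) :
    #(G.interedges (s₁ ∪ s₂) t) = #(G.interedges s₁ t) + #(G.interedges s₂ t) := by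
  have : G.interedges (s₁ ∪ s₂) t = G.interedges s₁ t ∪ G.interedges s₂ t := by
    ext; simp only [mem_interedges_iff, mem_union]; tauto
  rw [this, card_union_of_disjoint (G.interedges_disjoint_left h t)]

theorem card_interedges_union_right (s : Finset V) {t₁ t₂ : Finset V} (h : Disjoint t₁ t₂) :
    #(G.interedges s (t₁ ∪ t₂)) = #(G.interedges s t₁) + #(G.interedges s t₂) := by
  simp only [G.card_interedges_comm s, G.card_interedges_union_left h]

theorem card_interedges_insert_right (s : Finset V) {t : Finset V} {z : V} (hz : z ∉ t) :
    #(G.interedges s (insert z t)) = #(G.interedges s {z}) + #(G.interedges s t) := by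
  rw [insert_eq, G.card_interedges_union_right s (disjoint_singleton_left.2 hz)]

variable [Fintype V]

def cutCard (s : Finset V) : ℕ := #(G.interedges s sᶜ)

@[simp]
theorem cutCard_empty : G.cutCard ∅ = 0 := by
  simp [cutCard]

theorem cutCard_compl (s : Finset V) : G.cutCard sᶜ = G.cutCard s := by
  rw [cutCard, cutCard, compl_compl, card_interedges_comm]

theorem card_interedges_le_cutCard {s t : Finset V} (h : Disjoint s t) :
    #(G.interedges s t) ≤ G.cutCard s :=
  card_le_card (G.interedges_mono subset_rfl (le_compl_iff_disjoint_left.2 h))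

theorem cutCard_union_add {s t : Finset V} (h : Disjoint s t) :
    G.cutCard (s ∪ t) + 2 * #(G.interedges s t) = G.cutCard s + G.cutCard t := by
  have hs : sᶜ = t ∪ (s ∪ t)ᶜ := by
    ext x; by_cases hx : x ∈ t <;> simp [hx, Finset.disjoint_right.1 h]
  have ht : tᶜ = s ∪ (s ∪ t)ᶜ := by
    ext x; by_cases hx : x ∈ s <;> simp [hx, Finset.disjoint_left.1 h]
  have hs' : Disjoint t (s ∪ t)ᶜ := disjoint_compl_right.mono_left subset_union_right
  have ht' : Disjoint s (s ∪ t)ᶜ := disjoint_compl_right.mono_left subset_union_left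
  rw [cutCard, cutCard, cutCard, hs, ht, G.card_interedges_union_left h,
    G.card_interedges_union_right _ hs', G.card_interedges_union_right _ ht',
    G.card_interedges_comm t s]
  ring

theorem cutCard_sdiff_add_cutCard_sdiff_add_le (A B : Finset V) :
    G.cutCard (A \ B) + G.cutCard (B \ A) + 2 * #(G.interedges (A ∩ B) (A ∪ B)ᶜ) ≤
      G.cutCard A + G.cutCard B := by
  have hA := G.cutCard_union_add (disjoint_sdiff_inter A B)
  have hB := G.cutCard_union_add (disjoint_sdiff_inter B A)
  rw [sdiff_union_inter, G.card_interedges_comm] at hA hB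
  rw [inter_comm B A] at hB
  have hle := G.card_interedges_le_cutCard (s := A ∩ B) (t := A \ B ∪ (B \ A ∪ (A ∪ B)ᶜ))
    (by simp only [Finset.disjoint_left, mem_inter, mem_union, mem_sdiff, mem_compl]; tauto)
  rw [G.card_interedges_union_right _
      (by simp only [Finset.disjoint_left, mem_union, mem_sdiff, mem_compl]; tauto),
    G.card_interedges_union_right _
      (by simp only [Finset.disjoint_left, mem_union, mem_sdiff, mem_compl]; tauto)] at hle
  omega

theorem cutCard_singleton (z : V) : G.cutCard {z} = G.degree z := by
  have : G.interedges {z} {z}ᶜ = G.interedges {z} univ := by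
    ext ⟨x, y⟩
    simp only [mk_mem_interedges_iff, mem_singleton, mem_compl, mem_univ, true_and]
    exact ⟨fun h ↦ ⟨h.1, h.2.2⟩, fun h ↦ ⟨h.1, h.1 ▸ h.2.ne', h.2⟩⟩
  rw [cutCard, this, card_interedges_univ_right, sum_singleton]

variable {G} {d : ℕ}

theorem IsRegularOfDegree.cutCard_insert_add (hG : G.IsRegularOfDegree d) {s : Finset V} {z : V}
    (hz : z ∉ s) : G.cutCard (insert z s) + 2 * #(G.interedges s {z}) = G.cutCard s + d := by
  rw [insert_eq, union_comm, G.cutCard_union_add (disjoint_singleton_right.2 hz),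
    cutCard_singleton, hG z]

theorem IsRegularOfDegree.even_cutCard (hG : G.IsRegularOfDegree d) (hd : Even d)
    (s : Finset V) : Even (G.cutCard s) := by
  induction s using Finset.induction_on with
  | empty => simp
  | insert z s hz ih =>
    have := hG.cutCard_insert_add hz
    rw [Nat.even_iff] at hd ih ⊢
    omega

end SimpleGraph

section

variable {V : Type*} [Fintype V] {G : SimpleGraph V} [DecidableRel G.Adj]

theorem IsRegularGraph.isRegularOfDegree {d : ℕ} (h : IsRegularGraph G d) :
    G.IsRegularOfDegree d := fun v ↦ by
  rw [← h v, ← coe_neighborFinset, Set.ncard_coe_finset, card_neighborFinset_eq_degree]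

variable [DecidableEq V]

theorem ncard_edgeBoundary {H : G.Subgraph} {s : Finset V} (hH : H.verts = s) :
    (edgeBoundary G H).ncard = G.cutCard s := by
  have : edgeBoundary G H =
      ↑((G.interedges s sᶜ).image fun p ↦ s(p.1, p.2) : Finset (Sym2 V)) := by
    ext e
    simp only [edgeBoundary, hH, coe_image, Set.mem_image, mem_coe, mem_interedges_iff,
      mem_compl, Prod.exists, Set.mem_ofPred_eq]
    constructor
    · rintro ⟨u, v, rfl, huv, hu, hv⟩
      exact ⟨u, v, ⟨hu, hv, huv⟩, rfl⟩
    · rintro ⟨u, v, ⟨hu, hv, huv⟩, rfl⟩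
      exact ⟨u, v, rfl, huv, hu, hv⟩
  rw [this, Set.ncard_coe_finset, card_image_of_injOn, cutCard]
  rintro ⟨u, v⟩ huv ⟨u', v'⟩ huv' h
  simp only [mem_coe, mem_interedges_iff, mem_compl] at huv huv'
  rcases Sym2.eq_iff.1 h with ⟨rfl, rfl⟩ | ⟨rfl, rfl⟩
  · rfl
  · exact absurd huv.1 huv'.2.1

end

theorem lt_Delta (d : ℕ) : d < Delta d := by
  unfold Delta; split <;> omega

theorem Delta_le_add_two (d : ℕ) : Delta d ≤ d + 2 := by
  unfold Delta; split <;> omega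

theorem Delta_le_of_lt {d c : ℕ} (h : d < c) (hc : Even d → Even c) : Delta d ≤ c := by
  unfold Delta
  split_ifs with hd
  · exact h
  · have hce := hc (Nat.not_odd_iff_even.1 hd)
    rw [Nat.not_odd_iff_even, Nat.even_iff] at hd
    rw [Nat.even_iff] at hce
    omega

namespace SimpleGraph.IsRegularOfDegree

variable {V : Type*} [Fintype V] [DecidableEq V] {G : SimpleGraph V} [DecidableRel G.Adj]
  {d : ℕ}

theorem Delta_le_cutCard_of_card_eq_two (hG : G.IsRegularOfDegree d) (hd : 3 ≤ d)
    {s : Finset V} (hs : #s = 2) : Delta d ≤ G.cutCard s := by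
  obtain ⟨x, y, hxy, rfl⟩ := card_eq_two.1 hs
  have hcut := hG.cutCard_insert_add (s := {y}) (notMem_singleton.2 hxy)
  have hedge := G.card_interedges_le_mul {y} {x}
  rw [G.cutCard_singleton, hG y] at hcut
  rw [card_singleton, card_singleton] at hedge
  exact Delta_le_of_lt (by omega) fun _ ↦ ⟨d - #(G.interedges {y} {x}), by omega⟩

theorem false_of_three_petals (hG : G.IsRegularOfDegree d) (hd : 3 ≤ d) {m : ℕ}
    (hm : m ≤ d + 2) {S A B C : Finset V} {u w : V}
    (hSA : S ⊆ A) (hSB : S ⊆ B) (hSC : S ⊆ C)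
    (hA : #S + 1 = #A) (hB : #S + 1 = #B) (hC : #S + 1 = #C)
    (hAB : A ≠ B) (hAC : A ≠ C) (hBC : B ≠ C)
    (hu : u ∈ S) (hw : w ∉ A ∪ B ∪ C) (huw : G.Adj u w)
    (hcA : G.cutCard A = m) (hcB : G.cutCard B = m) (hcC : G.cutCard C = m)
    (hS : m ≤ G.cutCard S) : False := by
  obtain ⟨a, ha, rfl⟩ := exists_eq_insert_iff.2 ⟨hSA, hA⟩
  obtain ⟨b, hb, rfl⟩ := exists_eq_insert_iff.2 ⟨hSB, hB⟩
  obtain ⟨c, hc, rfl⟩ := exists_eq_insert_iff.2 ⟨hSC, hC⟩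
  have hab : a ≠ b := by rintro rfl; exact hAB rfl
  have hac : a ≠ c := by rintro rfl; exact hAC rfl
  have hbc : b ≠ c := by rintro rfl; exact hBC rfl
  simp only [mem_union, mem_insert, not_or] at hw
  obtain ⟨⟨⟨hwa, hwS⟩, hwb, -⟩, hwc, -⟩ := hw
  have eA := hG.cutCard_insert_add ha
  have eB := hG.cutCard_insert_add hb
  have eC := hG.cutCard_insert_add hc
  have hout : Disjoint S {a, b, c, w} := by
    simp only [disjoint_insert_right, disjoint_singleton_right]
    exact ⟨ha, hb, hc, hwS⟩
  have hle := G.card_interedges_le_cutCard hout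
  rw [G.card_interedges_insert_right _ (by simp [hab, hac, Ne.symm hwa]),
    G.card_interedges_insert_right _ (by simp [hbc, Ne.symm hwb]),
    G.card_interedges_insert_right _ (by simp [Ne.symm hwc])] at hle
  have hwedge : 0 < #(G.interedges S {w}) :=
    card_pos.2 ⟨(u, w), G.mk_mem_interedges_iff.2 ⟨hu, mem_singleton_self w, huw⟩⟩
  omega

end SimpleGraph.IsRegularOfDegree

theorem Finset.inter_subset_or_subset_union {α : Type*} [DecidableEq α] {A B C : Finset α}
    (hBA : #(B \ A) = 1) (hAC : #(A \ C) ≤ 1) (hBC : #(B \ C) ≤ 1) (hC : #C ≤ #A) :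
    A ∩ B ⊆ C ∨ C ⊆ A ∪ B := by
  refine or_iff_not_imp_left.2 fun h ↦ ?_
  obtain ⟨s, hs, hsC⟩ := not_subset.1 h
  rw [mem_inter] at hs
  have hsub : (A ∪ B).erase s ⊆ C := by
    intro x hx
    obtain ⟨hxs, hx⟩ := mem_erase.1 hx
    by_contra hxC
    rcases mem_union.1 hx with hxA | hxB
    · exact hxs (card_le_one.1 hAC x (mem_sdiff.2 ⟨hxA, hxC⟩) s (mem_sdiff.2 ⟨hs.1, hsC⟩))
    · exact hxs (card_le_one.1 hBC x (mem_sdiff.2 ⟨hxB, hxC⟩) s (mem_sdiff.2 ⟨hs.2, hsC⟩))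
  have hcard : #((A ∪ B).erase s) = #A := by
    rw [card_erase_of_mem (mem_union_left _ hs.1), union_comm, ← card_sdiff_add_card, hBA]
    omega
  rw [← eq_of_subset_of_card_le hsub (hcard ▸ hC)]
  exact erase_subset _ _

theorem Finset.card_add_two_le_card_univ {α : Type*} [Fintype α] [DecidableEq α] {s : Finset α}
    {u w : α} (hu : u ∉ s) (hw : w ∉ s) (huw : u ≠ w) : #s + 2 ≤ Fintype.card α := by
  calc #s + 2 = #(insert u (insert w s)) := by
        rw [card_insert_of_notMem (by simp [huw, hu]), card_insert_of_notMem hw]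
    _ ≤ Fintype.card α := card_le_univ _

theorem ncard_setOf_isClosedSubgraph_le {V : Type*} [Fintype V] [DecidableEq V]
    {G : SimpleGraph V} [DecidableRel G.Adj] (d : ℕ) (P : Set V → Prop) [DecidablePred P] :
    {H : G.Subgraph | IsClosedSubgraph G d H ∧ P H.verts}.ncard ≤
      #{A : Finset V | G.cutCard A = Delta d ∧ P A} := by
  classical
  rw [← Set.ncard_coe_finset]
  refine Set.ncard_le_ncard_of_injOn (fun H ↦ H.verts.toFinset) ?_ ?_ (finite_toSet _)
  · rintro H ⟨⟨-, hcut⟩, hP⟩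
    simp only [coe_filter, mem_univ, true_and, Set.mem_ofPred_eq, Set.coe_toFinset]
    exact ⟨(ncard_edgeBoundary (Set.coe_toFinset _).symm).symm.trans hcut, hP⟩
  · rintro H₁ ⟨⟨h₁, -⟩, -⟩ H₂ ⟨⟨h₂, -⟩, -⟩ h
    rw [← h₁.induce_top_verts, ← h₂.induce_top_verts, Set.toFinset_inj.1 h]

namespace LocallySparse

variable {n d : ℕ} {G : SimpleGraph (Fin n)} [DecidableRel G.Adj]

theorem Delta_le_cutCard (hls : LocallySparse G d) (hG : G.IsRegularOfDegree d) (hd : 3 ≤ d)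
    {s : Finset (Fin n)} (hs : 2 ≤ #s) (hsn : #s + 2 ≤ n) : Delta d ≤ G.cutCard s := by
  by_cases h2 : #s = 2
  · exact hG.Delta_le_cutCard_of_card_eq_two hd h2
  by_cases hn2 : #s + 2 = n
  · rw [← G.cutCard_compl]
    exact hG.Delta_le_cutCard_of_card_eq_two hd (by rw [card_compl, Fintype.card_fin]; omega)
  have hH : ((⊤ : G.Subgraph).induce (s : Set (Fin n))).verts = s := rfl
  have hsparse := hls _ (by rw [hH, Set.ncard_coe_finset]; omega)
    (by rw [hH, Set.ncard_coe_finset]; omega)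
  rw [ncard_edgeBoundary hH] at hsparse
  exact Delta_le_of_lt hsparse fun hd ↦ hG.even_cutCard hd s

theorem card_sdiff_eq_one (hls : LocallySparse G d) (hG : G.IsRegularOfDegree d) (hd : 3 ≤ d)
    {A B : Finset (Fin n)} (hAB : A ≠ B) (hcard : #A = #B)
    (hA : G.cutCard A = Delta d) (hB : G.cutCard B = Delta d) {u w : Fin n}
    (huA : u ∈ A) (huB : u ∈ B) (hwA : w ∉ A) (hwB : w ∉ B) (huw : G.Adj u w) :
    #(A \ B) = 1 := by
  have hsymm : #(A \ B) = #(B \ A) := card_sdiff_comm hcard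
  have hpos : 0 < #(A \ B) :=
    card_pos.2 (sdiff_nonempty.2 fun h ↦ hAB (eq_of_subset_of_card_le h hcard.ge))
  have hAn := card_add_two_le_card_univ (s := A \ B) (by simp [huB]) (by simp [hwA]) huw.ne
  have hBn := card_add_two_le_card_univ (s := B \ A) (by simp [huA]) (by simp [hwB]) huw.ne
  rw [Fintype.card_fin] at hAn hBn
  have hwedge : 0 < #(G.interedges (A ∩ B) (A ∪ B)ᶜ) :=
    card_pos.2 ⟨(u, w), G.mk_mem_interedges_iff.2 ⟨mem_inter.2 ⟨huA, huB⟩, by simp [hwA, hwB], huw⟩⟩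
  have hposimod := G.cutCard_sdiff_add_cutCard_sdiff_add_le A B
  by_contra hne
  have hQ := hls.Delta_le_cutCard hG hd (s := A \ B) (by omega) hAn
  have hR := hls.Delta_le_cutCard hG hd (s := B \ A) (by omega) hBn
  omega

theorem card_filter_cutCard_eq_Delta_le_two (hls : LocallySparse G d)
    (hG : G.IsRegularOfDegree d) (hd : 3 ≤ d) {v : ℕ} (hv : 3 ≤ v) (hvn : v + 3 ≤ n)
    {u w : Fin n} (huw : G.Adj u w) :
    #{A : Finset (Fin n) | G.cutCard A = Delta d ∧ #A = v ∧ u ∈ A ∧ w ∉ A} ≤ 2 := by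
  by_contra! h
  obtain ⟨A, hA, B, hB, C, hC, hAB, hAC, hBC⟩ := two_lt_card.1 h
  simp only [mem_filter, mem_univ, true_and] at hA hB hC
  obtain ⟨hAc, hAv, huA, hwA⟩ := hA
  obtain ⟨hBc, hBv, huB, hwB⟩ := hB
  obtain ⟨hCc, hCv, huC, hwC⟩ := hC
  have hAB1 := hls.card_sdiff_eq_one hG hd hAB (hAv.trans hBv.symm) hAc hBc huA huB hwA hwB huw
  have hBA1 := hls.card_sdiff_eq_one hG hd hAB.symm (hBv.trans hAv.symm) hBc hAc huB huA hwB hwA huw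
  have hAC1 := hls.card_sdiff_eq_one hG hd hAC (hAv.trans hCv.symm) hAc hCc huA huC hwA hwC huw
  have hBC1 := hls.card_sdiff_eq_one hG hd hBC (hBv.trans hCv.symm) hBc hCc huB huC hwB hwC huw
  have hΔ := Delta_le_add_two d
  have hinter : #(A ∩ B) + 1 = v := by have := card_sdiff_add_card_inter A B; omega
  have hunion : #(A ∪ B) = v + 1 := by
    have := card_sdiff_add_card B A; rw [union_comm] at this; omega
  rcases inter_subset_or_subset_union hBA1 hAC1.le hBC1.le (hCv.trans hAv.symm).le with hS | hU
  · refine hG.false_of_three_petals hd hΔ inter_subset_left inter_subset_right hS (by omega)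
      (by omega) (by omega) hAB hAC hBC (mem_inter.2 ⟨huA, huB⟩) (by simp [hwA, hwB, hwC]) huw
      hAc hBc hCc (hls.Delta_le_cutCard hG hd (by omega) (by omega))
  · have hcompl (X : Finset (Fin n)) : #Xᶜ = n - #X := by rw [card_compl, Fintype.card_fin]
    have hUn : #(A ∪ B) ≤ n := by simpa using card_le_univ (A ∪ B)
    refine hG.false_of_three_petals hd hΔ (S := (A ∪ B)ᶜ)
      (compl_subset_compl.2 subset_union_left) (compl_subset_compl.2 subset_union_right)
      (compl_subset_compl.2 hU) (by simp only [hcompl]; omega) (by simp only [hcompl]; omega)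
      (by simp only [hcompl]; omega) (compl_injective.ne hAB) (compl_injective.ne hAC)
      (compl_injective.ne hBC) (by simp [hwA, hwB]) (by simp [huA, huB, huC]) huw.symm
      (by rw [cutCard_compl, hAc]) (by rw [cutCard_compl, hBc]) (by rw [cutCard_compl, hCc])
      (hls.Delta_le_cutCard hG hd (by rw [hcompl]; omega) (by rw [hcompl]; omega))

theorem card_filter_cutCard_eq_Delta_mul_le (hls : LocallySparse G d)
    (hG : G.IsRegularOfDegree d) (hd : 3 ≤ d) {v : ℕ} (hv : 3 ≤ v) (hvn : v + 3 ≤ n)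
    (K : Finset (Fin n)) :
    #{A : Finset (Fin n) | G.cutCard A = Delta d ∧ #A = v ∧ A ⊆ K} * Delta d ≤ 2 * d * #K := by
  have hdc := card_mul_le_card_mul (fun A p ↦ p ∈ G.interedges A Aᶜ)
    (s := {A : Finset (Fin n) | G.cutCard A = Delta d ∧ #A = v ∧ A ⊆ K})
    (t := G.interedges K univ) (m := Delta d) (n := 2) ?_ ?_
  · rw [hG.card_interedges_univ_right] at hdc
    exact hdc.trans_eq (by ring)
  · intro A hA
    simp only [mem_filter, mem_univ, true_and] at hA
    rw [← hA.1]
    exact card_le_card fun p hp ↦ mem_filter.2 ⟨G.interedges_mono hA.2.2 (subset_univ _) hp, hp⟩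
  · rintro ⟨x, y⟩ hxy
    refine (card_le_card fun A hA ↦ ?_).trans
      (hls.card_filter_cutCard_eq_Delta_le_two hG hd hv hvn (G.mk_mem_interedges_iff.1 hxy).2.2)
    simp only [bipartiteBelow, mem_filter, mem_univ, true_and, mk_mem_interedges_iff,
      mem_compl] at hA ⊢
    exact ⟨hA.1.1, hA.1.2.1, hA.2.1, hA.2.2.1⟩

end LocallySparse

/-- For every `3 ≤ v ≤ n - 3`, the number of closed subgraphs of a locally sparse
`d`-regular graph `G` contained in the induced subgraph on `[k] = {0, …, k-1}` and having
`v` vertices is at most `2dk/3`. -/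
theorem count_closed_subgraphs_in_initial_segment {n d : ℕ} (hd : 3 ≤ d)
    (G : SimpleGraph (Fin n)) (hreg : IsRegularGraph G d) (hls : LocallySparse G d)
    (k v : ℕ) (h3 : 3 ≤ v) (hv : v ≤ n - 3) :
    3 * {H : G.Subgraph | IsClosedSubgraph G d H ∧ H.verts.ncard = v ∧
        H.verts ⊆ {u : Fin n | u.val < k}}.ncard ≤ 2 * d * k := by
  classical
  have hG := hreg.isRegularOfDegree
  set K : Finset (Fin n) := {u | u.val < k}
  have hK : #K ≤ k := by
    simpa using card_le_card_of_injOn Fin.val (t := range k) (fun x hx ↦ by simpa [K] using hx)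
      Fin.val_injective.injOn
  have hcount : {H : G.Subgraph | IsClosedSubgraph G d H ∧ H.verts.ncard = v ∧
      H.verts ⊆ {u : Fin n | u.val < k}}.ncard ≤
        #{A : Finset (Fin n) | G.cutCard A = Delta d ∧ #A = v ∧ A ⊆ K} := by
    refine (ncard_setOf_isClosedSubgraph_le d
      fun s : Set (Fin n) ↦ s.ncard = v ∧ s ⊆ {u | u.val < k}).trans_eq ?_
    simp [K, ← coe_subset]
  calc 3 * _ ≤ #{A : Finset (Fin n) | G.cutCard A = Delta d ∧ #A = v ∧ A ⊆ K} * Delta d :=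
        by rw [mul_comm]; exact Nat.mul_le_mul hcount (by have := lt_Delta d; omega)
    _ ≤ 2 * d * #K := hls.card_filter_cutCard_eq_Delta_mul_le hG hd h3 (by omega) K
    _ ≤ 2 * d * k := Nat.mul_le_mul_left _ hK
end

section
/- Let d ≥ 4 and let G be a random d-regular graph on [n]. Then with high probability, for every fixed graph H with at least (d|V(H)| − d)/2 edges and |V(H)| ≥ 3, G contains no subgraph isomorphic to H; consequently, with high probability every subgraph G̃ ⊆ G with 3 ≤ |V(G̃)| bounded has edge boundary |∂_e(G̃)| ≥ d+1. -/
open SimpleGraph Filter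

/-!
Switching argument. Replacing the edges `ab`, `xy` of a `d`-regular graph by `ax`, `by` keeps
it `d`-regular; for a fixed edge `ab` at least `dn - O(1)` pairs `(x, y)` are admissible, while
the original graph is recovered from the switched one and `(x, y) ∈ N(a) × N(b)`, at most `d²`
choices. So prescribing one more edge costs a factor `O(1/n)`, and a fixed graph `H` has a copy
in at most `n^{v(H)} O(1/n)^{e(H)}` of all `d`-regular graphs, which is `O(1/n)` once
`e(H) > v(H)`; for `d ≥ 4` and `v(H) ≥ 3` this follows from `2 e(H) ≥ d v(H) - d`.
A vertex set `S` with at most `d` boundary edges spans `(d|S| - |∂S|)/2 ≥ (d|S| - d)/2` edges,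
so the second part is a union bound over the finitely many such dense graphs on at most `K`
vertices. Circulant graphs show that `d`-regular graphs on `n > d` vertices exist when `dn` is
even.
-/

open Finset

namespace SimpleGraph

variable {V : Type*}

theorem isContained_iff_exists_embedding {W : Type*} {G : SimpleGraph V} {H : SimpleGraph W} :
    H ⊑ G ↔ ∃ f : W ↪ V, ∀ u v, H.Adj u v → G.Adj (f u) (f v) :=
  isContained_iff_exists_le_comap.trans (exists_congr fun _ => Iff.rfl)

def switch (G : SimpleGraph V) (a b x y : V) : SimpleGraph V :=
  fromEdgeSet (G.edgeSet \ {s(a, b), s(x, y)} ∪ {s(a, x), s(b, y)})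

structure IsSwitchable (G : SimpleGraph V) (a b x y : V) : Prop where
  adj_ab : G.Adj a b
  adj_xy : G.Adj x y
  x_ne_a : x ≠ a
  x_ne_b : x ≠ b
  y_ne_a : y ≠ a
  y_ne_b : y ≠ b
  not_adj_ax : ¬ G.Adj a x
  not_adj_by : ¬ G.Adj b y

variable {G : SimpleGraph V} {a b x y : V}

theorem switch_swap (G : SimpleGraph V) (a b x y : V) : G.switch x y a b = G.switch a b x y := by
  simp only [switch, Set.pair_comm s(x, y), Sym2.eq_swap]

theorem switch_rev (G : SimpleGraph V) (a b x y : V) : G.switch b a y x = G.switch a b x y := by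
  simp only [switch, Set.pair_comm, Sym2.eq_swap]

namespace IsSwitchable

theorem swap (h : G.IsSwitchable a b x y) : G.IsSwitchable x y a b :=
  ⟨h.adj_xy, h.adj_ab, h.x_ne_a.symm, h.y_ne_a.symm, h.x_ne_b.symm, h.y_ne_b.symm,
    fun h' => h.not_adj_ax h'.symm, fun h' => h.not_adj_by h'.symm⟩

theorem rev (h : G.IsSwitchable a b x y) : G.IsSwitchable b a y x :=
  ⟨h.adj_ab.symm, h.adj_xy.symm, h.y_ne_b, h.y_ne_a, h.x_ne_b, h.x_ne_a, h.not_adj_by,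
    h.not_adj_ax⟩

theorem edgeSet_switch (h : G.IsSwitchable a b x y) :
    (G.switch a b x y).edgeSet = G.edgeSet \ {s(a, b), s(x, y)} ∪ {s(a, x), s(b, y)} := by
  rw [switch, edgeSet_fromEdgeSet, sdiff_eq_left, Set.disjoint_left]
  rintro e (⟨he, -⟩ | he | he)
  · exact G.not_isDiag_of_mem_edgeSet he
  · exact he ▸ by simpa using h.x_ne_a.symm
  · exact he ▸ by simpa using h.y_ne_b.symm

theorem edgeSet_eq_switch_edgeSet_sdiff_union (h : G.IsSwitchable a b x y) :
    G.edgeSet = (G.switch a b x y).edgeSet \ {s(a, x), s(b, y)} ∪ {s(a, b), s(x, y)} := by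
  have : s(a, x) ∉ G.edgeSet ∧ s(b, y) ∉ G.edgeSet := ⟨h.not_adj_ax, h.not_adj_by⟩
  have : s(a, b) ∈ G.edgeSet ∧ s(x, y) ∈ G.edgeSet := ⟨h.adj_ab, h.adj_xy⟩
  rw [h.edgeSet_switch]
  ext e
  simp only [Set.mem_union, Set.mem_sdiff, Set.mem_insert_iff, Set.mem_singleton_iff]
  grind

theorem switch_injective {G' : SimpleGraph V} (h : G.IsSwitchable a b x y)
    (h' : G'.IsSwitchable a b x y) (heq : G.switch a b x y = G'.switch a b x y) : G = G' :=
  edgeSet_inj.mp <| by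
    rw [h.edgeSet_eq_switch_edgeSet_sdiff_union, h'.edgeSet_eq_switch_edgeSet_sdiff_union, heq]

theorem switch_adj_left (h : G.IsSwitchable a b x y) : (G.switch a b x y).Adj a x :=
  (mem_edgeSet _).mp (h.edgeSet_switch ▸ by simp)

theorem switch_adj_right (h : G.IsSwitchable a b x y) : (G.switch a b x y).Adj b y :=
  switch_rev G a b x y ▸ h.rev.switch_adj_left

theorem neighborSet_switch_left (h : G.IsSwitchable a b x y) :
    (G.switch a b x y).neighborSet a = insert x (G.neighborSet a \ {b}) := by
  ext v
  rw [mem_neighborSet, ← mem_edgeSet, h.edgeSet_switch]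
  have := h.adj_ab.ne
  have := h.x_ne_a; have := h.y_ne_a
  simp only [Set.mem_union, Set.mem_sdiff, Set.mem_insert_iff, Set.mem_singleton_iff,
    mem_edgeSet, Sym2.eq_iff, mem_neighborSet]
  grind

theorem neighborSet_switch_of_ne {u : V} (h : G.IsSwitchable a b x y) (ha : u ≠ a) (hb : u ≠ b)
    (hx : u ≠ x) (hy : u ≠ y) : (G.switch a b x y).neighborSet u = G.neighborSet u := by
  ext v
  rw [mem_neighborSet, ← mem_edgeSet, h.edgeSet_switch]
  simp only [Set.mem_union, Set.mem_sdiff, Set.mem_insert_iff, Set.mem_singleton_iff,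
    mem_edgeSet, Sym2.eq_iff, mem_neighborSet]
  grind

theorem isRegularGraph_switch [Finite V] {d : ℕ} (h : G.IsSwitchable a b x y)
    (hG : IsRegularGraph G d) : IsRegularGraph (G.switch a b x y) d := by
  have card_eq {a b x y : V} (h : G.IsSwitchable a b x y) :
      ((G.switch a b x y).neighborSet a).ncard = d := by
    have hb : b ∈ G.neighborSet a := h.adj_ab
    have hx : x ∉ G.neighborSet a \ {b} := fun hx => h.not_adj_ax hx.1
    rw [h.neighborSet_switch_left, Set.ncard_insert_of_notMem hx (Set.toFinite _),
      Set.ncard_sdiff_singleton_add_one hb, hG]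
  intro u
  rcases eq_or_ne u a with rfl | ha; · exact card_eq h
  rcases eq_or_ne u b with rfl | hb; · rw [← switch_rev]; exact card_eq h.rev
  rcases eq_or_ne u x with rfl | hx; · rw [← switch_swap]; exact card_eq h.swap
  rcases eq_or_ne u y with rfl | hy
  · rw [← switch_swap, ← switch_rev]; exact card_eq h.swap.rev
  rw [h.neighborSet_switch_of_ne ha hb hx hy, hG]

end IsSwitchable

end SimpleGraph

theorem isRegularGraph_circulantGraph {A : Type*} [AddGroup A] {s : Set A}
    (hneg : ∀ x ∈ s, -x ∈ s) (h0 : (0 : A) ∉ s) :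
    IsRegularGraph (circulantGraph s) s.ncard := by
  intro v
  have : (circulantGraph s).neighborSet v = (· + v) '' s := by
    ext w
    simp only [mem_neighborSet, circulantGraph_adj, Set.mem_image]
    constructor
    · rintro ⟨-, h | h⟩
      · exact ⟨-(v - w), hneg _ h, by rw [neg_sub, sub_add_cancel]⟩
      · exact ⟨w - v, h, sub_add_cancel w v⟩
    · rintro ⟨x, hx, rfl⟩
      refine ⟨fun h => h0 ((by simpa using h : x = 0) ▸ hx), Or.inr (by simpa using hx)⟩
  rw [this, Set.ncard_image_of_injective _ (add_left_injective v)]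

theorem exists_isRegularGraph_fin {n d : ℕ} (hn : d < n) (hdn : Even (d * n)) :
    ∃ G : SimpleGraph (Fin n), IsRegularGraph G d := by
  have : NeZero n := ⟨by omega⟩
  have hodd : d % 2 = 1 → n % 2 = 0 := by
    rcases Nat.even_mul.1 hdn with h | h <;> rw [Nat.even_iff] at h <;> omega
  -- the jumps `±1, …, ±(d / 2)`, and also the involution `n / 2` when `d` is odd
  let T : Finset ℕ :=
    Icc 1 (d / 2) ∪ Ico (n - d / 2) n ∪ if d % 2 = 1 then {n / 2} else ∅
  have hT : #T = d := by
    rw [card_union_of_disjoint, card_union_of_disjoint, Nat.card_Icc, Nat.card_Ico]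
    · split_ifs <;> simp <;> omega
    all_goals
      refine disjoint_left.2 fun t h₁ h₂ => ?_
      try split_ifs at h₂
      all_goals simp_all; try omega
  refine ⟨circulantGraph (Fin.val ⁻¹' T), ?_⟩
  convert isRegularGraph_circulantGraph (s := Fin.val ⁻¹' T) ?_ ?_
  · rw [Set.ncard_preimage_of_injective_subset_range Fin.val_injective, Set.ncard_coe_finset, hT]
    intro t ht
    have : t < n := by simp [T] at ht; split_ifs at ht <;> simp at ht <;> omega
    exact ⟨⟨t, this⟩, rfl⟩
  · intro i hi
    have := i.isLt
    simp only [Set.mem_preimage, Fin.val_neg', T, mem_coe, mem_union, mem_Icc, mem_Ico] at hi ⊢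
    split_ifs at hi ⊢ with hd <;> simp only [mem_singleton, notMem_empty, or_false] at hi ⊢
    all_goals
      rw [Nat.mod_eq_of_lt (by omega)]
      omega
  · simp only [T, Set.mem_preimage, Fin.val_zero, mem_coe, mem_union, mem_Icc, mem_Ico]
    split_ifs <;> simp <;> omega

theorem add_one_le_of_mul_le_two_mul_add {d h e : ℕ} (hd : 4 ≤ d) (hh : 3 ≤ h)
    (hE : d * h ≤ 2 * e + d) : h + 1 ≤ e := by
  nlinarith

theorem tendsto_div_add_of_mul_le {l : Filter ℕ} (hl : l ≤ atTop) {g b : ℕ → ℕ} (C : ℕ)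
    (hpos : ∀ᶠ n in l, 0 < g n + b n) (hb : ∀ᶠ n in l, n * b n ≤ C * (g n + b n)) :
    Tendsto (fun n => (g n : ℝ) / (g n + b n : ℕ)) l (nhds 1) := by
  have hC : Tendsto (fun n : ℕ => 1 - (C : ℝ) / n) atTop (nhds 1) := by
    simpa using tendsto_const_nhds.sub (tendsto_const_div_atTop_nhds_zero_nat (C : ℝ))
  refine tendsto_of_tendsto_of_tendsto_of_le_of_le' (hC.mono_left hl) tendsto_const_nhds ?_
    (Eventually.of_forall fun n =>
      div_le_one_of_le₀ (by exact_mod_cast Nat.le_add_right _ _) (Nat.cast_nonneg _))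
  filter_upwards [hpos, hb, (eventually_gt_atTop 0).filter_mono hl] with n hpos hb hn
  have hbC : (b n : ℝ) / (g n + b n : ℕ) ≤ C / n := by
    rw [div_le_div_iff₀ (by exact_mod_cast hpos) (by exact_mod_cast hn)]
    exact_mod_cast (mul_comm (b n) n).trans_le hb
  have : (g n : ℝ) / (g n + b n : ℕ) = 1 - (b n : ℝ) / (g n + b n : ℕ) := by
    field_simp
    push_cast
    ring
  linarith

section Counting

open Classical

variable {V : Type*} [Fintype V] {d : ℕ}

theorem IsRegularGraph.degree_eq {G : SimpleGraph V} [DecidableRel G.Adj]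
    (hG : IsRegularGraph G d) (v : V) : G.degree v = d := by
  rw [← hG v, ← card_neighborFinset_eq_degree, neighborFinset_def, Set.ncard_eq_toFinset_card']

noncomputable def adjPairs (G : SimpleGraph V) : Finset (V × V) :=
  {p | G.Adj p.1 p.2}

theorem card_adjPairs_fst_mem (G : SimpleGraph V) (S : Finset V) :
    #{p ∈ adjPairs G | p.1 ∈ S} = ∑ u ∈ S, G.degree u := by
  rw [card_eq_sum_card_fiberwise (f := Prod.fst) (s := {p ∈ adjPairs G | p.1 ∈ S}) (t := S)
    fun p hp => (mem_filter.1 hp).2]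
  refine sum_congr rfl fun u hu => card_nbij' Prod.snd (fun v => (u, v)) ?_ ?_ ?_ ?_
  all_goals first | rintro ⟨x, y⟩ | intro v
  all_goals simp +contextual [adjPairs, hu]
  rintro h - rfl
  exact h

theorem card_adjPairs_snd_mem (G : SimpleGraph V) (S : Finset V) :
    #{p ∈ adjPairs G | p.2 ∈ S} = ∑ u ∈ S, G.degree u := by
  rw [← card_adjPairs_fst_mem, ← card_map (Equiv.prodComm V V).toEmbedding]
  congr 1
  ext ⟨u, v⟩
  simp [adjPairs, G.adj_comm]

theorem card_adjPairs (G : SimpleGraph V) : #(adjPairs G) = 2 * #G.edgeFinset := by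
  simpa [sum_degrees_eq_twice_card_edges] using card_adjPairs_fst_mem G univ

theorem card_filter_sym2_mk_mem_le (F : Finset (Sym2 V)) :
    #{p : V × V | s(p.1, p.2) ∈ F} ≤ 2 * #F := by
  refine card_le_mul_card_image_of_maps_to (f := fun p => s(p.1, p.2)) (by simp) 2 fun e _ => ?_
  induction e using Sym2.ind with
  | _ u v =>
    refine (card_le_card (t := {(u, v), (v, u)}) fun p hp => ?_).trans card_le_two
    simp_all [Prod.ext_iff]

theorem IsRegularGraph.card_adjPairs_fst_mem {G : SimpleGraph V} (hG : IsRegularGraph G d)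
    (S : Finset V) : #{p ∈ adjPairs G | p.1 ∈ S} = d * #S := by
  simp [_root_.card_adjPairs_fst_mem, hG.degree_eq, mul_comm]

theorem IsRegularGraph.card_adjPairs_snd_mem {G : SimpleGraph V} (hG : IsRegularGraph G d)
    (S : Finset V) : #{p ∈ adjPairs G | p.2 ∈ S} = d * #S := by
  simp [_root_.card_adjPairs_snd_mem, hG.degree_eq, mul_comm]

variable {a b : V}

noncomputable def switchablePairs (G : SimpleGraph V) (a b : V) (F : Finset (Sym2 V)) :
    Finset (V × V) :=
  {p | G.IsSwitchable a b p.1 p.2 ∧ s(p.1, p.2) ∉ F}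

theorem card_switchablePairs_ge {G : SimpleGraph V} (hG : IsRegularGraph G d) (hab : G.Adj a b)
    (F : Finset (Sym2 V)) :
    d * Fintype.card V ≤ #(switchablePairs G a b F) + (2 * d * (d + 2) + 2 * #F) := by
  have card_le (v : V) : #(insert a (insert b (G.neighborFinset v))) ≤ d + 2 :=
    (card_insert_le _ _).trans (by grw [card_insert_le, card_neighborFinset_eq_degree,
      hG.degree_eq])
  set S₁ := insert a (insert b (G.neighborFinset a))
  set S₂ := insert a (insert b (G.neighborFinset b))
  have hcover : adjPairs G ⊆ switchablePairs G a b F ∪ {p ∈ adjPairs G | p.1 ∈ S₁} ∪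
      {p ∈ adjPairs G | p.2 ∈ S₂} ∪ ({p | s(p.1, p.2) ∈ F} : Finset (V × V)) := by
    rintro ⟨x, y⟩ hxy
    simp only [adjPairs, switchablePairs, S₁, S₂, mem_union, mem_filter, mem_univ, true_and,
      mem_insert, mem_neighborFinset] at hxy ⊢
    by_contra! h
    exact h.2 (h.1.1.1 ⟨hab, hxy, by grind, by grind, by grind, by grind, by grind, by grind⟩)
  have h₁ := Nat.mul_le_mul_left d (card_le a)
  have h₂ := Nat.mul_le_mul_left d (card_le b)
  have := hG.card_adjPairs_fst_mem S₁
  have := hG.card_adjPairs_snd_mem S₂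
  have := card_filter_sym2_mk_mem_le F
  calc d * Fintype.card V = #(adjPairs G) := by simpa using (hG.card_adjPairs_fst_mem univ).symm
    _ ≤ _ := card_le_card hcover
    _ ≤ _ := (card_union_le _ _).trans (add_le_add_left ((card_union_le _ _).trans
          (add_le_add_left (card_union_le _ _) _)) _)
    _ ≤ _ := by nlinarith

variable (V d) in
noncomputable def regularGraphs : Finset (SimpleGraph V) :=
  {G | IsRegularGraph G d}

variable (V d) in
noncomputable def regularGraphsContaining (F : Finset (Sym2 V)) : Finset (SimpleGraph V) :=
  {G ∈ regularGraphs V d | ↑F ⊆ G.edgeSet}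

theorem mem_regularGraphsContaining {F : Finset (Sym2 V)} {G : SimpleGraph V} :
    G ∈ regularGraphsContaining V d F ↔ IsRegularGraph G d ∧ ↑F ⊆ G.edgeSet := by
  simp [regularGraphsContaining, regularGraphs]

theorem regularGraphsContaining_empty : regularGraphsContaining V d ∅ = regularGraphs V d := by
  simp [regularGraphsContaining]

theorem card_regularGraphsContaining_insert_le {F : Finset (Sym2 V)} (habF : s(a, b) ∉ F) :
    (d * Fintype.card V - (2 * d * (d + 2) + 2 * #F)) *
        #(regularGraphsContaining V d (insert s(a, b) F)) ≤
      d * d * #(regularGraphsContaining V d F) := by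
  -- Switching maps the configurations `(G, (x, y))` injectively to pairs `(G', (x, y))` with
  -- `x ∈ N_{G'}(a)` and `y ∈ N_{G'}(b)`.
  calc _ ≤ #((regularGraphsContaining V d (insert s(a, b) F)).sigma
          fun G => switchablePairs G a b F) := by
        rw [card_sigma, mul_comm, ← smul_eq_mul, ← sum_const]
        refine sum_le_sum fun G hG => ?_
        rw [mem_regularGraphsContaining, coe_insert, Set.insert_subset_iff] at hG
        have hab : G.Adj a b := hG.2.1
        have := card_switchablePairs_ge hG.1 hab F
        omega
    _ ≤ #((regularGraphsContaining V d F).sigma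
          fun G => G.neighborFinset a ×ˢ G.neighborFinset b) := by
        refine card_le_card_of_injOn (fun q => ⟨q.1.switch a b q.2.1 q.2.2, q.2⟩) ?_ ?_
        · rintro ⟨G, x, y⟩ hq
          simp only [coe_sigma, Set.mem_sigma_iff, mem_coe, switchablePairs, mem_filter,
            mem_univ, true_and, mem_regularGraphsContaining, coe_insert,
            Set.insert_subset_iff] at hq ⊢
          obtain ⟨⟨hG, -, hF⟩, hs, hxyF⟩ := hq
          refine ⟨⟨hs.isRegularGraph_switch hG, ?_⟩, ?_⟩
          · rw [hs.edgeSet_switch]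
            intro e he
            refine Or.inl ⟨hF he, ?_⟩
            rintro (rfl | rfl) <;> contradiction
          · simp [hs.switch_adj_left, hs.switch_adj_right]
        · rintro ⟨G, x, y⟩ hq ⟨G', x', y'⟩ hq' heq
          simp only [Sigma.mk.injEq, Prod.mk.injEq, heq_eq_eq] at heq
          obtain ⟨hG, rfl, rfl⟩ := heq
          simp only [coe_sigma, Set.mem_sigma_iff, mem_coe, switchablePairs, mem_filter,
            mem_univ, true_and] at hq hq'
          rw [hq.2.1.switch_injective hq'.2.1 hG]
    _ = _ := by
        rw [card_sigma, mul_comm, ← smul_eq_mul, ← sum_const]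
        refine sum_congr rfl fun G hG => ?_
        have hG := (mem_regularGraphsContaining.1 hG).1
        rw [card_product, card_neighborFinset_eq_degree, card_neighborFinset_eq_degree,
          hG.degree_eq, hG.degree_eq]

theorem pow_mul_card_regularGraphsContaining_le {e : ℕ} (F : Finset (Sym2 V)) (hF : #F ≤ e) :
    (d * Fintype.card V - (2 * d * (d + 2) + 2 * e)) ^ #F * #(regularGraphsContaining V d F) ≤
      (d * d) ^ #F * #(regularGraphs V d) := by
  induction F using Finset.induction_on with
  | empty => simp [regularGraphsContaining_empty]
  | insert f F hf ih =>
    induction f using Sym2.ind with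
    | _ a b =>
    rw [card_insert_of_notMem hf] at hF ⊢
    set c := d * Fintype.card V - (2 * d * (d + 2) + 2 * e)
    have hc : c ≤ d * Fintype.card V - (2 * d * (d + 2) + 2 * #F) := by omega
    calc c ^ (#F + 1) * #(regularGraphsContaining V d (insert s(a, b) F))
        = c ^ #F * (c * #(regularGraphsContaining V d (insert s(a, b) F))) := by ring
      _ ≤ c ^ #F * (d * d * #(regularGraphsContaining V d F)) := Nat.mul_le_mul_left _
          ((Nat.mul_le_mul_right _ hc).trans (card_regularGraphsContaining_insert_le hf))
      _ = d * d * (c ^ #F * #(regularGraphsContaining V d F)) := by ring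
      _ ≤ d * d * ((d * d) ^ #F * #(regularGraphs V d)) := by grw [ih (by omega)]
      _ = (d * d) ^ (#F + 1) * #(regularGraphs V d) := by ring

variable (V d) in
noncomputable def regularGraphsWithCopy {W : Type*} (H : SimpleGraph W) :
    Finset (SimpleGraph V) :=
  {G ∈ regularGraphs V d | H ⊑ G}

theorem card_regularGraphsWithCopy_le {W : Type*} [Fintype W] (H : SimpleGraph W) :
    (d * Fintype.card V - (2 * d * (d + 2) + 2 * #H.edgeFinset)) ^ #H.edgeFinset *
        #(regularGraphsWithCopy V d H) ≤
      Fintype.card V ^ Fintype.card W * ((d * d) ^ #H.edgeFinset * #(regularGraphs V d)) := by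
  set c := d * Fintype.card V - (2 * d * (d + 2) + 2 * #H.edgeFinset)
  have hcover : regularGraphsWithCopy V d H ⊆ (univ : Finset (W ↪ V)).biUnion
      fun f => regularGraphsContaining V d (H.edgeFinset.map f.sym2Map) := by
    intro G hG
    simp only [regularGraphsWithCopy, regularGraphs, mem_filter, mem_univ, true_and] at hG
    obtain ⟨f, hf⟩ := isContained_iff_exists_embedding.1 hG.2
    simp only [mem_biUnion, mem_univ, true_and, mem_regularGraphsContaining, coe_map]
    refine ⟨f, hG.1, ?_⟩
    rintro _ ⟨e, he, rfl⟩
    induction e using Sym2.ind with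
    | _ u v => exact hf u v (mem_edgeFinset.1 he)
  have hcard (f : W ↪ V) : #(H.edgeFinset.map f.sym2Map) = #H.edgeFinset := card_map _
  calc c ^ #H.edgeFinset * #(regularGraphsWithCopy V d H)
      ≤ ∑ f : W ↪ V, c ^ #H.edgeFinset *
          #(regularGraphsContaining V d (H.edgeFinset.map f.sym2Map)) := by
        rw [← mul_sum]
        exact Nat.mul_le_mul_left _ ((card_le_card hcover).trans card_biUnion_le)
    _ ≤ ∑ _f : W ↪ V, (d * d) ^ #H.edgeFinset * #(regularGraphs V d) :=
        sum_le_sum fun f _ => hcard f ▸ pow_mul_card_regularGraphsContaining_le _ (hcard f).le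
    _ ≤ _ := by
        rw [sum_const, card_univ, Fintype.card_embedding_eq, smul_eq_mul]
        exact Nat.mul_le_mul_right _ (Nat.descFactorial_le_pow _ _)

theorem two_mul_ncard_edgeSet_comap_add_ncard_edgeBoundary {W : Type*} [Fintype W]
    {G : SimpleGraph V} (hG : IsRegularGraph G d) (Ht : G.Subgraph) (f : W ↪ V)
    (hf : Set.range f = Ht.verts) :
    2 * (G.comap f).edgeSet.ncard + (edgeBoundary G Ht).ncard = d * Fintype.card W := by
  set S := Ht.verts.toFinset
  have hS : univ.map f = S := by ext; simp [S, ← hf]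
  have hin : {p ∈ {p ∈ adjPairs G | p.1 ∈ S} | p.2 ∈ S} =
      (adjPairs (G.comap f)).map (f.prodMap f) := by
    ext ⟨u, v⟩
    simp only [adjPairs, S, ← hf, mem_filter, mem_univ, true_and, Set.mem_toFinset,
      Set.mem_range, Finset.mem_map, Function.Embedding.coe_prodMap, Prod.map, Prod.mk.injEq,
      comap_adj, Prod.exists]
    constructor
    · rintro ⟨⟨h, i, rfl⟩, j, rfl⟩
      exact ⟨i, j, h, rfl, rfl⟩
    · rintro ⟨i, j, h, rfl, rfl⟩
      exact ⟨⟨h, i, rfl⟩, j, rfl⟩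
  have hout : edgeBoundary G Ht =
      ↑({p ∈ {p ∈ adjPairs G | p.1 ∈ S} | p.2 ∉ S}.image fun p => s(p.1, p.2)) := by
    ext e
    simp only [edgeBoundary, adjPairs, S, Set.mem_ofPred_eq, coe_image, coe_filter, mem_filter,
      mem_univ, true_and, Set.mem_toFinset, Set.mem_image, Prod.exists]
    grind
  have hinj : Set.InjOn (fun p : V × V => s(p.1, p.2))
      ({p ∈ {p ∈ adjPairs G | p.1 ∈ S} | p.2 ∉ S} : Finset (V × V)) := by
    rintro ⟨u, v⟩ huv ⟨u', v'⟩ huv' h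
    simp_all
    grind
  rw [Set.ncard_eq_toFinset_card', ← card_univ, ← card_map f, hS,
    ← hG.card_adjPairs_fst_mem S,
    ← card_filter_add_card_filter_not (s := {p ∈ adjPairs G | p.1 ∈ S}) (·.2 ∈ S), hin,
    card_map, card_adjPairs, hout, Set.ncard_coe_finset, card_image_of_injOn hinj]
  congr

theorem exists_isContained_of_ncard_edgeBoundary_le {G : SimpleGraph V}
    (hG : IsRegularGraph G d) (Ht : G.Subgraph) (hb : (edgeBoundary G Ht).ncard ≤ d) :
    ∃ H : SimpleGraph (Fin Ht.verts.ncard), H ⊑ G ∧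
      d * Ht.verts.ncard ≤ 2 * H.edgeSet.ncard + d := by
  let f : Fin Ht.verts.ncard ↪ V :=
    (Finite.equivFin Ht.verts).symm.toEmbedding.trans (Function.Embedding.subtype _)
  have hf : Set.range f = Ht.verts := by
    ext v
    refine ⟨fun ⟨i, hi⟩ => hi ▸ ((Finite.equivFin Ht.verts).symm i).2, fun hv => ?_⟩
    exact ⟨Finite.equivFin Ht.verts ⟨v, hv⟩,
      congrArg Subtype.val ((Finite.equivFin Ht.verts).symm_apply_apply ⟨v, hv⟩)⟩
  refine ⟨G.comap f, isContained_iff_exists_le_comap.2 ⟨f, le_rfl⟩, ?_⟩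
  have := two_mul_ncard_edgeSet_comap_add_ncard_edgeBoundary hG Ht f hf
  rw [Fintype.card_fin] at this
  omega

theorem eventually_mul_card_regularGraphsWithCopy_le (hd : 2 ≤ d) {W : Type*} [Fintype W]
    (H : SimpleGraph W) (hH : Fintype.card W < #H.edgeFinset) :
    ∀ᶠ n in atTop, n * #(regularGraphsWithCopy (Fin n) d H) ≤
      (d * d) ^ #H.edgeFinset * #(regularGraphs (Fin n) d) := by
  set c := 2 * d * (d + 2) + 2 * #H.edgeFinset
  filter_upwards [eventually_ge_atTop (max 1 c)] with n hn
  have key := card_regularGraphsWithCopy_le (V := Fin n) (d := d) H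
  rw [Fintype.card_fin] at key
  have hc : n ≤ d * n - c := by
    have := Nat.mul_le_mul_right n hd
    omega
  refine Nat.le_of_mul_le_mul_left ?_ (pow_pos (by omega : 0 < n) (Fintype.card W))
  calc n ^ Fintype.card W * (n * #(regularGraphsWithCopy (Fin n) d H))
      = n ^ (Fintype.card W + 1) * #(regularGraphsWithCopy (Fin n) d H) := by ring
    _ ≤ n ^ #H.edgeFinset * #(regularGraphsWithCopy (Fin n) d H) := by
        gcongr
        exacts [by omega, hH]
    _ ≤ (d * n - c) ^ #H.edgeFinset * #(regularGraphsWithCopy (Fin n) d H) := by gcongr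
    _ ≤ _ := key

theorem tendsto_ncard_div_ncard_isRegularGraph (P : ∀ n, SimpleGraph (Fin n) → Prop) (C : ℕ)
    (hbound : ∀ᶠ n in atTop,
      n * #{G ∈ regularGraphs (Fin n) d | ¬ P n G} ≤ C * #(regularGraphs (Fin n) d)) :
    Tendsto (fun n : ℕ => ({G : SimpleGraph (Fin n) | IsRegularGraph G d ∧ P n G}.ncard : ℝ) /
        ({G : SimpleGraph (Fin n) | IsRegularGraph G d}.ncard : ℝ))
      (atTop ⊓ principal {n : ℕ | Even (d * n)}) (nhds 1) := by
  have hsplit (n : ℕ) : {G : SimpleGraph (Fin n) | IsRegularGraph G d ∧ P n G}.ncard +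
      #{G ∈ regularGraphs (Fin n) d | ¬ P n G} = #(regularGraphs (Fin n) d) := by
    have : {G : SimpleGraph (Fin n) | IsRegularGraph G d ∧ P n G} =
        ↑({G ∈ regularGraphs (Fin n) d | P n G}) := by
      ext
      simp [regularGraphs]
    rw [this, Set.ncard_coe_finset, card_filter_add_card_filter_not]
  have htotal (n : ℕ) :
      {G : SimpleGraph (Fin n) | IsRegularGraph G d}.ncard = #(regularGraphs (Fin n) d) := by
    rw [← Set.ncard_coe_finset]
    simp [regularGraphs]
  have hpos : ∀ᶠ n in atTop ⊓ principal {n : ℕ | Even (d * n)},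
      0 < #(regularGraphs (Fin n) d) := by
    rw [eventually_inf_principal]
    filter_upwards [eventually_gt_atTop d] with n hn hdn
    obtain ⟨G, hG⟩ := exists_isRegularGraph_fin hn hdn
    exact card_pos.2 ⟨G, by simpa [regularGraphs] using hG⟩
  simp_rw [htotal, ← hsplit] at hbound hpos ⊢
  exact tendsto_div_add_of_mul_le inf_le_left C hpos (hbound.filter_mono inf_le_left)

theorem exists_eventually_mul_card_small_edgeBoundary_le (hd : 4 ≤ d) (K : ℕ) :
    ∃ C, ∀ᶠ n in atTop, n * #{G ∈ regularGraphs (Fin n) d | ∃ Ht : G.Subgraph,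
        3 ≤ Ht.verts.ncard ∧ Ht.verts.ncard ≤ K ∧ (edgeBoundary G Ht).ncard ≤ d} ≤
      C * #(regularGraphs (Fin n) d) := by
  let I : Finset (Σ s, SimpleGraph (Fin s)) := (range (K + 1)).sigma fun s =>
    {H : SimpleGraph (Fin s) | 3 ≤ s ∧ d * s ≤ 2 * H.edgeSet.ncard + d}
  have hI : ∀ i ∈ I, i.1 < #i.2.edgeFinset := fun i hi => by
    simp only [I, mem_sigma, mem_filter, mem_univ, true_and] at hi
    rw [Set.ncard_eq_toFinset_card'] at hi
    exact add_one_le_of_mul_le_two_mul_add hd hi.2.1 hi.2.2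
  refine ⟨∑ i ∈ I, (d * d) ^ #i.2.edgeFinset, ?_⟩
  filter_upwards [(eventually_all_finset I).2 fun i hi =>
    eventually_mul_card_regularGraphsWithCopy_le (d := d) (by omega) i.2 (by simpa using hI i hi)]
    with n hn
  have hcover : {G ∈ regularGraphs (Fin n) d | ∃ Ht : G.Subgraph,
      3 ≤ Ht.verts.ncard ∧ Ht.verts.ncard ≤ K ∧ (edgeBoundary G Ht).ncard ≤ d} ⊆
      I.biUnion fun i => regularGraphsWithCopy (Fin n) d i.2 := by
    intro G hG
    simp only [regularGraphs, mem_filter, mem_univ, true_and] at hG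
    obtain ⟨hG, Ht, h3, hK, hb⟩ := hG
    obtain ⟨H, hHG, hH⟩ := exists_isContained_of_ncard_edgeBoundary_le hG Ht hb
    simp only [mem_biUnion]
    refine ⟨⟨_, H⟩, by simp [I]; omega, ?_⟩
    simp [regularGraphsWithCopy, regularGraphs, hG, hHG]
  calc _ ≤ n * ∑ i ∈ I, #(regularGraphsWithCopy (Fin n) d i.2) :=
        Nat.mul_le_mul_left _ ((card_le_card hcover).trans card_biUnion_le)
    _ ≤ _ := by
        rw [mul_sum, sum_mul]
        exact sum_le_sum hn

end Counting

/-- For `d ≥ 4`, a uniformly random `d`-regular graph on `[n]` (with `dn` even) whp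
contains no copy of any fixed graph `H` with `|V(H)| ≥ 3` and `|E(H)| ≥ (d|V(H)| - d)/2`;
consequently, whp every subgraph on at least 3 and boundedly many vertices has edge
boundary of size at least `d + 1`. Probabilities are written as counting ratios. -/
theorem random_regular_graph_no_dense_subgraphs (d : ℕ) (hd : 4 ≤ d) :
    (∀ (h : ℕ) (H : SimpleGraph (Fin h)), 3 ≤ h → d * h ≤ 2 * H.edgeSet.ncard + d →
      Tendsto (fun n : ℕ =>
          ({G : SimpleGraph (Fin n) | IsRegularGraph G d ∧
              ¬ ∃ f : Fin h ↪ Fin n, ∀ u v, H.Adj u v → G.Adj (f u) (f v)}.ncard : ℝ) /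
            ({G : SimpleGraph (Fin n) | IsRegularGraph G d}.ncard : ℝ))
        (atTop ⊓ Filter.principal {n : ℕ | Even (d * n)}) (nhds 1)) ∧
    (∀ K : ℕ, Tendsto (fun n : ℕ =>
          ({G : SimpleGraph (Fin n) | IsRegularGraph G d ∧
              ∀ Ht : G.Subgraph, 3 ≤ Ht.verts.ncard → Ht.verts.ncard ≤ K →
                d + 1 ≤ (edgeBoundary G Ht).ncard}.ncard : ℝ) /
            ({G : SimpleGraph (Fin n) | IsRegularGraph G d}.ncard : ℝ))
        (atTop ⊓ Filter.principal {n : ℕ | Even (d * n)}) (nhds 1)) := by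
  classical
  refine ⟨fun h H hh hE => ?_, fun K => ?_⟩
  · rw [← coe_edgeFinset, Set.ncard_coe_finset] at hE
    have hH := add_one_le_of_mul_le_two_mul_add hd hh hE
    refine tendsto_ncard_div_ncard_isRegularGraph _ ((d * d) ^ #H.edgeFinset) ?_
    filter_upwards [eventually_mul_card_regularGraphsWithCopy_le (d := d) (by omega) H
      (by simpa using hH)] with n hn
    simpa [regularGraphsWithCopy, isContained_iff_exists_embedding] using hn
  · obtain ⟨C, hC⟩ := exists_eventually_mul_card_small_edgeBoundary_le hd K
    refine tendsto_ncard_div_ncard_isRegularGraph _ C ?_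
    filter_upwards [hC] with n hn
    convert hn using 4
    simp
end
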